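/- arXiv:1503.04485 — 2 statements merged into one kernel-verified Lean document; each statement's English description precedes it below -/
import Mathlib

section
/- Let α > −1 and let m, n be nonnegative integers. Then the parameter-raising expansion (m + n + α + 1) · P^α_{m,n} = [(m + α + 1)(n + α + 1)/(α + 1)] · P^{α+1}_{m,n} − [m·n/(α + 1)] · P^{α+1}_{m−1, n−1} holds as an identity of functions on the unit disk, with the convention that P^{α+1}_{m−1,n−1} ≡ 0 if m = 0 or n = 0. -/
open MeasureTheory

noncomputable section

abbrev E (d : ℕ) := EuclideanSpace ℝ (Fin d)

/-- The measure `ρ(x)^α dx` restricted to the unit ball `B^d`, where `ρ(x) = 1 - |x|²`. -/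
def zmeasure (d : ℕ) (a : ℝ) : Measure (E d) :=
  (volume.restrict (Metric.ball (0 : E d) 1)).withDensity
    (fun x => ENNReal.ofReal ((1 - ‖x‖ ^ 2) ^ a))

/-- Squared weighted L² norm `‖u‖²_{L²_{ρ^a}(B^d)}`. -/
def wnormSq (d : ℕ) (a : ℝ) (u : E d → ℂ) : ℝ :=
  ∫ x, ‖u x‖ ^ 2 ∂ zmeasure d a

/-- Weighted L² norm `‖u‖_{L²_{ρ^a}(B^d)}`. -/
def wnorm (d : ℕ) (a : ℝ) (u : E d → ℂ) : ℝ := Real.sqrt (wnormSq d a u)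

/-- The Jacobi polynomial `P^{(a,b)}_n` (explicit hypergeometric form; it is orthogonal on
`(-1,1)` w.r.t. `(1-t)^a (1+t)^b` and normalized by `P^{(a,b)}_n(1) = binom(n+a, n)`). -/
def jacobiP (a b : ℝ) (n : ℕ) (x : ℝ) : ℝ :=
  ∑ s ∈ Finset.range (n + 1),
    (Real.Gamma (a + n + 1) / (Real.Gamma (a + s + 1) * (Nat.factorial (n - s)))) *
    (Real.Gamma (b + n + 1) / (Real.Gamma (b + ((n - s : ℕ) : ℝ) + 1) * (Nat.factorial s))) *
    ((x - 1) / 2) ^ s * ((x + 1) / 2) ^ (n - s)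

/-- The Zernike polynomial `P^a_{m,n}` on the unit disk (Wünsche's normalization):
`P^a_{m,n} = [Γ(min(m,n)+1)Γ(a+1)/Γ(min(m,n)+a+1)] r^{|m−n|} e^{i(m−n)θ}
P^{(a,|m−n|)}_{min(m,n)}(2r²−1)`. -/
def zern (a : ℝ) (m n : ℕ) (x : E 2) : ℂ :=
  (((Real.Gamma ((min m n : ℕ) + 1) * Real.Gamma (a + 1) /
      Real.Gamma ((min m n : ℕ) + a + 1)) : ℝ) : ℂ) *
  (if n ≤ m then ((x 0 : ℂ) + (x 1 : ℂ) * Complex.I) ^ (m - n)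
   else ((x 0 : ℂ) - (x 1 : ℂ) * Complex.I) ^ (n - m)) *
  ((jacobiP a ((max m n - min m n : ℕ) : ℝ) (min m n) (2 * ‖x‖ ^ 2 - 1) : ℝ) : ℂ)

/-
In the basis `u^s v^(n-s)`, `u = (x-1)/2`, `v = (x+1)/2`, the coefficients of `P^(a+1,b)_(n+1)`,
`v P^(a+1,b)_n` and `u P^(a+1,b)_n` are explicit rational multiples of those of `P^(a,b)_(n+1)`
(Gamma recursion), and `v - u = 1`; this yields the contiguous relation
`(2n+a+b+3) P^(a,b)_(n+1) = (n+a+b+2) P^(a+1,b)_(n+1) - (n+b+1) P^(a+1,b)_n`.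
A Zernike polynomial is an angular factor, unchanged under `(m, n) ↦ (m+1, n+1)`, times a
normalized Jacobi polynomial in `2r²-1` of degree `min m n` with `b = |m - n|`, so the theorem is
this relation rescaled by the Gamma normalizations.
-/

def jacobiCoeff (a b : ℝ) (n s : ℕ) : ℝ :=
  (Real.Gamma (a + n + 1) / (Real.Gamma (a + s + 1) * (Nat.factorial (n - s)))) *
  (Real.Gamma (b + n + 1) / (Real.Gamma (b + ((n - s : ℕ) : ℝ) + 1) * (Nat.factorial s)))

theorem jacobiP_eq_sum (a b : ℝ) (n : ℕ) (x : ℝ) :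
    jacobiP a b n x = ∑ s ∈ Finset.range (n + 1),
      jacobiCoeff a b n s * ((x - 1) / 2) ^ s * ((x + 1) / 2) ^ (n - s) := rfl

theorem jacobiCoeff_add_left (a b : ℝ) (s d : ℕ) :
    jacobiCoeff a b (s + d) s =
      Real.Gamma (a + s + d + 1) / (Real.Gamma (a + s + 1) * d.factorial) *
        (Real.Gamma (b + s + d + 1) / (Real.Gamma (b + d + 1) * s.factorial)) := by
  simp only [jacobiCoeff, Nat.add_sub_cancel_left, Nat.cast_add, add_assoc]

theorem Gamma_eq_mul_Gamma {x y : ℝ} (hy : 0 < y) (hxy : x = y + 1) :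
    Real.Gamma x = y * Real.Gamma y := by
  rw [hxy, Real.Gamma_add_one hy.ne']

section
variable {a b : ℝ} (ha : -1 < a) (hb : -1 < b)
include ha hb

theorem jacobiCoeff_raise_same_degree {n s : ℕ} (hs : s ≤ n) :
    (a + s + 1) * jacobiCoeff (a + 1) b n s = (a + n + 1) * jacobiCoeff a b n s := by
  obtain ⟨d, rfl⟩ := Nat.exists_eq_add_of_le hs
  have hs0 : (0 : ℝ) ≤ s := s.cast_nonneg
  have hd0 : (0 : ℝ) ≤ d := d.cast_nonneg
  rw [jacobiCoeff_add_left, jacobiCoeff_add_left,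
    Gamma_eq_mul_Gamma (x := a + 1 + s + d + 1) (y := a + s + d + 1) (by linarith) (by ring),
    Gamma_eq_mul_Gamma (x := a + 1 + s + 1) (y := a + s + 1) (by linarith) (by ring)]
  have := (Real.Gamma_pos_of_pos (show 0 < a + s + 1 by linarith)).ne'
  have := (Real.Gamma_pos_of_pos (show 0 < b + d + 1 by linarith)).ne'
  have : a + s + 1 ≠ 0 := by linarith
  field_simp
  push_cast
  ring

theorem jacobiCoeff_raise_lower_degree {n s : ℕ} (hs : s ≤ n) :
    (a + s + 1) * ((n + 1 + b) * jacobiCoeff (a + 1) b n s) =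
      ((n : ℝ) + 1 - s) * ((n : ℝ) + 1 + b - s) * jacobiCoeff a b (n + 1) s := by
  obtain ⟨d, rfl⟩ := Nat.exists_eq_add_of_le hs
  have hs0 : (0 : ℝ) ≤ s := s.cast_nonneg
  have hd0 : (0 : ℝ) ≤ d := d.cast_nonneg
  rw [add_assoc s d 1, jacobiCoeff_add_left, jacobiCoeff_add_left, Nat.factorial_succ,
    Gamma_eq_mul_Gamma (x := a + 1 + s + 1) (y := a + s + 1) (by linarith) (by ring),
    Gamma_eq_mul_Gamma (x := b + s + (d + 1 : ℕ) + 1) (y := b + s + d + 1) (by linarith)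
      (by push_cast; ring),
    Gamma_eq_mul_Gamma (x := b + (d + 1 : ℕ) + 1) (y := b + d + 1) (by linarith)
      (by push_cast; ring),
    show a + 1 + s + d + 1 = a + s + (d + 1 : ℕ) + 1 by push_cast; ring]
  have := (Real.Gamma_pos_of_pos (show 0 < a + s + 1 by linarith)).ne'
  have := (Real.Gamma_pos_of_pos (show 0 < b + d + 1 by linarith)).ne'
  have : a + s + 1 ≠ 0 := by linarith
  have : b + d + 1 ≠ 0 := by linarith
  field_simp
  push_cast
  ring

theorem jacobiCoeff_raise_lower_degree_shift {n s : ℕ} (hs : s ≤ n) :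
    (n + 1 + b) * jacobiCoeff (a + 1) b n s = (s + 1) * jacobiCoeff a b (n + 1) (s + 1) := by
  obtain ⟨d, rfl⟩ := Nat.exists_eq_add_of_le hs
  have hs0 : (0 : ℝ) ≤ s := s.cast_nonneg
  have hd0 : (0 : ℝ) ≤ d := d.cast_nonneg
  rw [add_right_comm s d 1, jacobiCoeff_add_left, jacobiCoeff_add_left, Nat.factorial_succ,
    Gamma_eq_mul_Gamma (x := b + (s + 1 : ℕ) + d + 1) (y := b + s + d + 1) (by linarith)
      (by push_cast; ring),
    show a + 1 + s + d + 1 = a + (s + 1 : ℕ) + d + 1 by push_cast; ring,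
    show a + 1 + s + 1 = a + (s + 1 : ℕ) + 1 by push_cast; ring]
  have := (Real.Gamma_pos_of_pos (show 0 < a + s + 2 by linarith)).ne'
  have := (Real.Gamma_pos_of_pos (show 0 < b + d + 1 by linarith)).ne'
  field_simp
  push_cast
  ring
end

theorem jacobiP_raise {a b : ℝ} (ha : -1 < a) (hb : -1 < b) (n : ℕ) (x : ℝ) :
    (2 * n + a + b + 3) * jacobiP a b (n + 1) x =
      (n + a + b + 2) * jacobiP (a + 1) b (n + 1) x - (n + 1 + b) * jacobiP (a + 1) b n x := by
  set u := (x - 1) / 2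
  set v := (x + 1) / 2
  set T : ℕ → ℝ := fun s => jacobiCoeff a b (n + 1) s * u ^ s * v ^ (n + 1 - s)
  have hpos : ∀ s : ℕ, a + s + 1 ≠ 0 := fun s => by
    have := s.cast_nonneg (α := ℝ); linarith
  have h_same : jacobiP (a + 1) b (n + 1) x =
      ∑ s ∈ Finset.range (n + 2), (a + n + 2) / (a + s + 1) * T s := by
    rw [jacobiP_eq_sum]
    refine Finset.sum_congr rfl fun s hs => ?_
    have := jacobiCoeff_raise_same_degree ha hb (Nat.le_of_lt_succ (Finset.mem_range.1 hs))
    rw [div_mul_eq_mul_div, eq_div_iff (hpos s)]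
    push_cast at this
    linear_combination (u ^ s * v ^ (n + 1 - s)) * this
  have h_lower : (n + 1 + b) * jacobiP (a + 1) b n x =
      ∑ s ∈ Finset.range (n + 2),
        ((n : ℝ) + 1 - s) * ((n : ℝ) + 1 + b - s) / (a + s + 1) * T s -
      ∑ s ∈ Finset.range (n + 2), (s : ℝ) * T s := by
    have h_v : ∑ s ∈ Finset.range (n + 1),
          (n + 1 + b) * jacobiCoeff (a + 1) b n s * u ^ s * v ^ (n - s) * v =
        ∑ s ∈ Finset.range (n + 2),
          ((n : ℝ) + 1 - s) * ((n : ℝ) + 1 + b - s) / (a + s + 1) * T s := by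
      simp only [Finset.sum_range_succ _ (n + 1), Nat.cast_add_one, sub_self, zero_mul, zero_div,
        add_zero]
      refine Finset.sum_congr rfl fun s hs => ?_
      have hsn := Nat.le_of_lt_succ (Finset.mem_range.1 hs)
      have := jacobiCoeff_raise_lower_degree ha hb hsn
      rw [div_mul_eq_mul_div, eq_div_iff (hpos s)]
      simp only [T, show n + 1 - s = n - s + 1 by omega]
      linear_combination (u ^ s * v ^ (n - s + 1)) * this
    have h_u : ∑ s ∈ Finset.range (n + 1),
          (n + 1 + b) * jacobiCoeff (a + 1) b n s * u ^ s * v ^ (n - s) * u =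
        ∑ s ∈ Finset.range (n + 2), (s : ℝ) * T s := by
      rw [Finset.sum_range_succ' _ (n + 1), Nat.cast_zero, zero_mul, add_zero]
      refine Finset.sum_congr rfl fun s hs => ?_
      have := jacobiCoeff_raise_lower_degree_shift ha hb
        (Nat.le_of_lt_succ (Finset.mem_range.1 hs))
      simp only [T, Nat.cast_add_one, Nat.add_sub_add_right]
      linear_combination (u ^ (s + 1) * v ^ (n - s)) * this
    have hvu : v - u = 1 := by ring
    rw [← h_v, ← h_u, ← Finset.sum_sub_distrib, jacobiP_eq_sum, Finset.mul_sum]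
    refine Finset.sum_congr rfl fun s _ => ?_
    linear_combination (-(n + 1 + b) * jacobiCoeff (a + 1) b n s * u ^ s * v ^ (n - s)) * hvu
  have h_top : jacobiP a b (n + 1) x = ∑ s ∈ Finset.range (n + 2), T s := rfl
  rw [h_top, h_same, h_lower, Finset.mul_sum, Finset.mul_sum, ← Finset.sum_sub_distrib,
    ← Finset.sum_sub_distrib]
  refine Finset.sum_congr rfl fun s _ => ?_
  field_simp [hpos s]
  ring

theorem jacobiP_zero {a b : ℝ} (ha : -1 < a) (hb : -1 < b) (x : ℝ) : jacobiP a b 0 x = 1 := by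
  have := (Real.Gamma_pos_of_pos (show 0 < a + 1 by linarith)).ne'
  have := (Real.Gamma_pos_of_pos (show 0 < b + 1 by linarith)).ne'
  simp [jacobiP, *]

def zernAngular (m n : ℕ) (x : E 2) : ℂ :=
  if n ≤ m then ((x 0 : ℂ) + (x 1 : ℂ) * Complex.I) ^ (m - n)
  else ((x 0 : ℂ) - (x 1 : ℂ) * Complex.I) ^ (n - m)

def zernRadial (a : ℝ) (m n : ℕ) (t : ℝ) : ℝ :=
  Real.Gamma ((min m n : ℕ) + 1) * Real.Gamma (a + 1) / Real.Gamma ((min m n : ℕ) + a + 1) *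
    jacobiP a ((max m n - min m n : ℕ) : ℝ) (min m n) t

theorem zern_eq_zernAngular_mul_zernRadial (a : ℝ) (m n : ℕ) (x : E 2) :
    zern a m n x = zernAngular m n x * zernRadial a m n (2 * ‖x‖ ^ 2 - 1) := by
  simp only [zern, zernAngular, zernRadial]
  push_cast
  ring

theorem zernAngular_add_one_add_one (m n : ℕ) (x : E 2) :
    zernAngular (m + 1) (n + 1) x = zernAngular m n x := by
  simp only [zernAngular, Nat.add_le_add_iff_right, Nat.add_sub_add_right]

theorem zernRadial_comm (a : ℝ) (m n : ℕ) (t : ℝ) :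
    zernRadial a m n t = zernRadial a n m t := by
  rw [zernRadial, zernRadial, min_comm, max_comm]

theorem zernRadial_add_left (a : ℝ) (n j : ℕ) (t : ℝ) :
    zernRadial a (n + j) n t =
      Real.Gamma (n + 1) * Real.Gamma (a + 1) / Real.Gamma (n + a + 1) * jacobiP a j n t := by
  rw [zernRadial, min_eq_right (Nat.le_add_right n j), max_eq_left (Nat.le_add_right n j),
    Nat.add_sub_cancel_left]

theorem zernRadial_of_min_eq_zero {a : ℝ} (ha : -1 < a) {m n : ℕ} (h : min m n = 0) (t : ℝ) :
    zernRadial a m n t = 1 := by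
  rw [zernRadial, h, jacobiP_zero ha (neg_one_lt_zero.trans_le (Nat.cast_nonneg _))]
  have := (Real.Gamma_pos_of_pos (show 0 < a + 1 by linarith)).ne'
  simp [this]

theorem zernRadial_add_one_add_one {a : ℝ} (ha : -1 < a) (m n : ℕ) (t : ℝ) :
    (m + n + a + 3) * zernRadial a (m + 1) (n + 1) t =
      (m + a + 2) * (n + a + 2) / (a + 1) * zernRadial (a + 1) (m + 1) (n + 1) t -
        (m + 1) * (n + 1) / (a + 1) * zernRadial (a + 1) m n t := by
  wlog h : n ≤ m generalizing m n
  · rw [zernRadial_comm a, zernRadial_comm (a + 1), zernRadial_comm (a + 1) m]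
    linear_combination this n m (le_of_not_ge h)
  obtain ⟨j, rfl⟩ := Nat.exists_eq_add_of_le h
  rw [add_right_comm n j 1, zernRadial_add_left, zernRadial_add_left, zernRadial_add_left]
  have hn0 : (0 : ℝ) ≤ n := n.cast_nonneg
  rw [Gamma_eq_mul_Gamma (x := (n + 1 : ℕ) + 1) (y := n + 1) (by linarith) (by push_cast; ring),
    Gamma_eq_mul_Gamma (x := a + 1 + 1) (y := a + 1) (by linarith) rfl,
    Gamma_eq_mul_Gamma (x := (n + 1 : ℕ) + (a + 1) + 1) (y := n + a + 2) (by linarith)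
      (by push_cast; ring),
    show ((n + 1 : ℕ) : ℝ) + a + 1 = n + a + 2 by push_cast; ring,
    show (n : ℝ) + (a + 1) + 1 = n + a + 2 by ring]
  have hP := jacobiP_raise ha (neg_one_lt_zero.trans_le j.cast_nonneg) n t
  have := (Real.Gamma_pos_of_pos (show 0 < (n : ℝ) + a + 2 by linarith)).ne'
  have : a + 1 ≠ 0 := by linarith
  have : (n : ℝ) + a + 2 ≠ 0 := by linarith
  field_simp
  push_cast
  linear_combination Real.Gamma (a + 1) * hP

/-- **Parameter-raising expansion.** For `α > −1` and `m, n ∈ ℕ₀`,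
`(m+n+α+1) P^α_{m,n} = [(m+α+1)(n+α+1)/(α+1)] P^{α+1}_{m,n} − [mn/(α+1)] P^{α+1}_{m−1,n−1}`
on the unit disk, with `P^{α+1}_{m−1,n−1} ≡ 0` when `m = 0` or `n = 0`. -/
theorem zernike_parameter_raise (a : ℝ) (ha : -1 < a) (m n : ℕ) :
    ∀ x ∈ Metric.ball (0 : E 2) 1,
      ((((m : ℝ) + n + a + 1) : ℝ) : ℂ) * zern a m n x =
        ((((m + a + 1) * ((n : ℝ) + a + 1) / (a + 1)) : ℝ) : ℂ) * zern (a + 1) m n x -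
          ((((m : ℝ) * n / (a + 1)) : ℝ) : ℂ) *
            (if m = 0 ∨ n = 0 then 0 else zern (a + 1) (m - 1) (n - 1) x) := by
  intro x _
  have ha' : (a : ℂ) + 1 ≠ 0 := by exact_mod_cast (show 0 < a + 1 by linarith).ne'
  simp only [zern_eq_zernAngular_mul_zernRadial]
  split_ifs with h0
  · have hmin : min m n = 0 := by omega
    have hmn : (m : ℂ) * n = 0 := by rcases h0 with rfl | rfl <;> simp
    rw [zernRadial_of_min_eq_zero ha hmin, zernRadial_of_min_eq_zero (by linarith) hmin]
    push_cast
    field_simp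
    linear_combination -zernAngular m n x * hmn
  · obtain ⟨m, rfl⟩ := Nat.exists_eq_add_one_of_ne_zero (not_or.1 h0).1
    obtain ⟨n, rfl⟩ := Nat.exists_eq_add_one_of_ne_zero (not_or.1 h0).2
    have := congrArg Complex.ofReal (zernRadial_add_one_add_one ha m n (2 * ‖x‖ ^ 2 - 1))
    simp only [Nat.add_sub_cancel, zernAngular_add_one_add_one]
    push_cast at this ⊢
    linear_combination zernAngular m n x * this

end
end

section
/- Let α > −1 and let m, n be nonnegative integers. Then the same-parameter expansions with respect to first-order derivatives hold as identities of functions on the unit disk: (m + n + α + 1) · P^α_{m,n} = [(n + α + 1)/(n + 1)] · ∂_{z̄} P^α_{m,n+1} − [m/(m + α)] · ∂_{z̄} P^α_{m−1, n}, and (m + n + α + 1) · P^α_{m,n} = [(m + α + 1)/(m + 1)] · ∂_z P^α_{m+1,n} − [n/(n + α)] · ∂_z P^α_{m,n−1}, where any term whose Zernike index is negative is zero (in particular the coefficient m/(m+α), resp. n/(n+α), is interpreted as 0 when m = 0, resp. n = 0). -/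
open MeasureTheory

noncomputable section

/-- The Wirtinger derivative `∂_z̄ f = (∂₁ f + i ∂₂ f)/2` (classical derivatives). -/
def dzbar (f : E 2 → ℂ) (x : E 2) : ℂ :=
  (fderiv ℝ f x (EuclideanSpace.single 0 1) + Complex.I * fderiv ℝ f x (EuclideanSpace.single 1 1)) / 2

/-- The Wirtinger derivative `∂_z f = (∂₁ f − i ∂₂ f)/2` (classical derivatives). -/
def dz (f : E 2 → ℂ) (x : E 2) : ℂ :=
  (fderiv ℝ f x (EuclideanSpace.single 0 1) - Complex.I * fderiv ℝ f x (EuclideanSpace.single 1 1)) / 2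


/-!
Write `u = z`, `v = z̄`. The hypergeometric form of the Jacobi polynomial at `2|z|² - 1` exhibits
`P^α_{m,n}` as `∑ₛ c^α_{m,n,s} u^{m-s} v^{n-s} (uv - 1)^s`, a polynomial in two commuting
variables on which `∂_z̄` and `∂_z` act as `∂/∂v` and `∂/∂u`. Two hypergeometric-term identities
for the coefficients then give the lowering formula
`∂_z̄ P^α_{m,n} = n (m+α+1)/(α+1) · P^{α+1}_{m,n-1}` (and its mirror image for `∂_z`) and the
contiguous relation
`(α+1)(m+n+α+1) P^α_{m,n} = (m+α+1)(n+α+1) P^{α+1}_{m,n} - mn P^{α+1}_{m-1,n-1}`.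
Substituting the lowering formula into the two claimed expansions turns each of them into the
contiguous relation.
-/

open Finset
open scoped Nat

theorem descPochhammer_succ_eval_add_one {R : Type*} [CommRing R] (n : ℕ) (x : R) :
    (descPochhammer R (n + 1)).eval (x + 1) = (x + 1) * (descPochhammer R n).eval x := by
  simp [descPochhammer_succ_left]

theorem ascPochhammer_succ_eval_left {R : Type*} [CommSemiring R] (n : ℕ) (x : R) :
    (ascPochhammer R (n + 1)).eval x = x * (ascPochhammer R n).eval (x + 1) := by
  simp [ascPochhammer_succ_left]

theorem Real.Gamma_add_nat_eq_ascPochhammer_mul {x : ℝ} (hx : ∀ n : ℕ, x ≠ -n) (s : ℕ) :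
    Real.Gamma (x + s) = (ascPochhammer ℝ s).eval x * Real.Gamma x := by
  induction s with
  | zero => simp
  | succ s ih =>
    have hs : x + s ≠ 0 := fun h => hx s (eq_neg_of_add_eq_zero_left h)
    rw [Nat.cast_succ, ← add_assoc, Real.Gamma_add_one hs, ih, ascPochhammer_succ_eval]
    ring

theorem MvPolynomial.hasFDerivAt_aeval_clm {σ F 𝔸 : Type*} [Fintype σ] [DecidableEq σ]
    [NormedAddCommGroup F] [NormedSpace ℝ F] [NormedCommRing 𝔸] [NormedAlgebra ℝ 𝔸]
    (L : σ → F →L[ℝ] 𝔸) (p : MvPolynomial σ ℝ) (x : F) :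
    HasFDerivAt (fun y => aeval (fun i => L i y) p)
      (∑ i, aeval (fun i => L i x) (pderiv i p) • L i) x := by
  induction p using MvPolynomial.induction_on with
  | C r =>
    refine (hasFDerivAt_const (𝕜 := ℝ) (algebraMap ℝ 𝔸 r) x).congr_fderiv ?_
      |>.congr_of_eventuallyEq ?_
    · ext v; simp
    · simp
  | add p q hp hq =>
    refine (hp.fun_add hq).congr_fderiv ?_ |>.congr_of_eventuallyEq ?_
    · ext v; simp [add_mul, Finset.sum_add_distrib]
    · simp
  | mul_X p j hp =>
    refine (hp.fun_mul (L j).hasFDerivAt).congr_fderiv ?_ |>.congr_of_eventuallyEq ?_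
    · ext v
      simp [Derivation.leibniz, pderiv_X, Pi.single_apply, add_mul, Finset.sum_add_distrib,
        apply_ite (aeval _), Finset.mul_sum, mul_assoc]
    · simp

def zernikeCoeff (a : ℝ) (m n s : ℕ) : ℝ :=
  (descPochhammer ℝ s).eval (m : ℝ) * (descPochhammer ℝ s).eval (n : ℝ) /
    (s ! * (ascPochhammer ℝ s).eval (a + 1))

section ZernikeCoeff

variable {a : ℝ}

theorem zernikeCoeff_comm (a : ℝ) (m n s : ℕ) : zernikeCoeff a m n s = zernikeCoeff a n m s := by
  rw [zernikeCoeff, zernikeCoeff, mul_comm ((descPochhammer ℝ s).eval (m : ℝ))]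

@[simp] theorem zernikeCoeff_zero (a : ℝ) (m n : ℕ) : zernikeCoeff a m n 0 = 1 := by
  simp [zernikeCoeff]

theorem zernikeCoeff_eq_zero_of_lt_left (a : ℝ) {m s : ℕ} (n : ℕ) (h : m < s) :
    zernikeCoeff a m n s = 0 := by
  simp [zernikeCoeff, descPochhammer_eval_coe_nat_of_lt h]

theorem zernikeCoeff_eq_zero_of_lt_right (a : ℝ) (m : ℕ) {n s : ℕ} (h : n < s) :
    zernikeCoeff a m n s = 0 := by
  rw [zernikeCoeff_comm, zernikeCoeff_eq_zero_of_lt_left a m h]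

theorem zernikeCoeff_mul_natCast_sub (a : ℝ) (m n s : ℕ) :
    zernikeCoeff a m n s * ((n - s : ℕ) : ℝ) = zernikeCoeff a m n s * ((n : ℝ) - s) := by
  rcases le_or_gt s n with h | h
  · rw [Nat.cast_sub h]
  · rw [zernikeCoeff_eq_zero_of_lt_right a m h, zero_mul, zero_mul]

theorem zernikeCoeff_succ_mul (ha : -1 < a) (m n s : ℕ) :
    zernikeCoeff a m n (s + 1) * ((s + 1) * (a + 1 + s)) =
      zernikeCoeff a m n s * ((m - s) * (n - s)) := by
  have hρ := ascPochhammer_pos s (a + 1) (by linarith)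
  have hs : 0 < a + 1 + s := by linarith [(Nat.cast_nonneg s : (0 : ℝ) ≤ s)]
  simp only [zernikeCoeff, descPochhammer_succ_eval, ascPochhammer_succ_eval, Nat.factorial_succ,
    Nat.cast_mul, Nat.cast_add, Nat.cast_one]
  field_simp

theorem zernikeCoeff_succ_right_mul (m n s : ℕ) :
    zernikeCoeff a m (n + 1) s * (n + 1 - s) = (n + 1) * zernikeCoeff a m n s := by
  have h := descPochhammer_succ_eval_add_one s (n : ℝ)
  rw [descPochhammer_succ_eval] at h
  simp only [zernikeCoeff, Nat.cast_add, Nat.cast_one]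
  rw [div_mul_eq_mul_div, mul_assoc, h]
  ring

theorem zernikeCoeff_add_one_mul (ha : -1 < a) (m n s : ℕ) :
    zernikeCoeff (a + 1) m n s * (a + 1 + s) = (a + 1) * zernikeCoeff a m n s := by
  have hρ := ascPochhammer_pos s (a + 1) (by linarith)
  have hρ' := ascPochhammer_pos s (a + 1 + 1) (by linarith)
  have h := ascPochhammer_succ_eval_left s (a + 1)
  rw [ascPochhammer_succ_eval] at h
  simp only [zernikeCoeff]
  field_simp
  linear_combination ((descPochhammer ℝ s).eval (m : ℝ) * (descPochhammer ℝ s).eval (n : ℝ)) * h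

theorem zernikeCoeff_succ_succ_succ_mul (ha : -1 < a) (m n s : ℕ) :
    zernikeCoeff a (m + 1) (n + 1) (s + 1) * ((s + 1) * (a + 1)) =
      (m + 1) * (n + 1) * zernikeCoeff (a + 1) m n s := by
  have hρ := ascPochhammer_pos s (a + 1 + 1) (by linarith)
  have ha1 : 0 < a + 1 := by linarith
  simp only [zernikeCoeff, Nat.cast_add, Nat.cast_one, descPochhammer_succ_eval_add_one,
    ascPochhammer_succ_eval_left, Nat.factorial_succ, Nat.cast_mul]
  field_simp

theorem zernikeCoeff_lowering (ha : -1 < a) (m n s : ℕ) :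
    zernikeCoeff a m (n + 1) s * (n + 1 - s) + (s + 1) * zernikeCoeff a m (n + 1) (s + 1) =
      (n + 1) * (m + a + 1) / (a + 1) * zernikeCoeff (a + 1) m n s := by
  have hs : a + 1 + s ≠ 0 := by linarith [(Nat.cast_nonneg s : (0 : ℝ) ≤ s)]
  have ha1 : a + 1 ≠ 0 := by linarith
  have h1 := zernikeCoeff_succ_mul ha m (n + 1) s
  have h2 := zernikeCoeff_succ_right_mul (a := a) m n s
  have h3 := zernikeCoeff_add_one_mul ha m n s
  push_cast at h1
  rw [div_mul_eq_mul_div, eq_div_iff ha1]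
  apply mul_left_cancel₀ hs
  linear_combination (a + 1) * h1 + (a + 1) * (m + a + 1) * h2 - (n + 1) * (m + a + 1) * h3

theorem zernikeCoeff_contiguous (ha : -1 < a) (m n s : ℕ) :
    (a + 1) * (m + n + a + 3) * zernikeCoeff a (m + 1) (n + 1) (s + 1) =
      (m + a + 2) * (n + a + 2) * zernikeCoeff (a + 1) (m + 1) (n + 1) (s + 1) -
        (m + 1) * (n + 1) * (zernikeCoeff (a + 1) m n (s + 1) - zernikeCoeff (a + 1) m n s) := by
  have hs : (s + 1) * (a + 2 + s) ≠ 0 := by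
    have : (0 : ℝ) ≤ s := Nat.cast_nonneg s
    apply mul_ne_zero <;> linarith
  have h1 := zernikeCoeff_succ_succ_succ_mul ha m n s
  have h2 := zernikeCoeff_add_one_mul ha (m + 1) (n + 1) (s + 1)
  have h3 := zernikeCoeff_succ_mul (a := a + 1) (by linarith) m n s
  push_cast at h2
  apply mul_left_cancel₀ hs
  linear_combination (a + 2 + s) * (m + n + a + 3) * h1 - (s + 1) * (m + a + 2) * (n + a + 2) * h2
    - (m + a + 2) * (n + a + 2) * h1 + (m + 1) * (n + 1) * h3

end ZernikeCoeff

section ZernikeForm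

variable {A : Type*} [CommRing A] [Algebra ℝ A] (u v : A)

def zernikeForm (a : ℝ) (m n : ℕ) : A :=
  ∑ s ∈ range (min m n + 1), zernikeCoeff a m n s • (u ^ (m - s) * v ^ (n - s) * (u * v - 1) ^ s)

variable {u v}

theorem zernikeForm_eq_sum_range {a : ℝ} {m n N : ℕ} (h : min m n < N) :
    zernikeForm u v a m n =
      ∑ s ∈ range N, zernikeCoeff a m n s • (u ^ (m - s) * v ^ (n - s) * (u * v - 1) ^ s) := by
  refine sum_subset (range_subset_range.2 h) fun s _ hs => ?_
  rcases min_lt_iff.1 (Nat.lt_of_lt_of_le (Nat.lt_succ_self _) (not_lt.1 (mem_range.not.1 hs)))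
    with hm | hn
  · rw [zernikeCoeff_eq_zero_of_lt_left a n hm, zero_smul]
  · rw [zernikeCoeff_eq_zero_of_lt_right a m hn, zero_smul]

theorem zernikeForm_comm (a : ℝ) (m n : ℕ) : zernikeForm v u a n m = zernikeForm u v a m n := by
  simp only [zernikeForm, min_comm n m, zernikeCoeff_comm a n m, mul_comm v u]
  exact sum_congr rfl fun s _ => by rw [mul_comm (v ^ (n - s))]

@[simp] theorem zernikeForm_zero_left (a : ℝ) (n : ℕ) : zernikeForm u v a 0 n = v ^ n := by
  simp [zernikeForm]

@[simp] theorem zernikeForm_zero_right (a : ℝ) (m : ℕ) : zernikeForm u v a m 0 = u ^ m := by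
  simp [zernikeForm]

theorem zernikeForm_succ_succ (a : ℝ) (m n : ℕ) :
    zernikeForm u v a (m + 1) (n + 1) =
      ∑ s ∈ range (m + 1), zernikeCoeff a (m + 1) (n + 1) (s + 1) •
        (u ^ (m - s) * v ^ (n - s) * (u * v - 1) ^ (s + 1)) + u ^ (m + 1) * v ^ (n + 1) := by
  rw [zernikeForm_eq_sum_range (N := m + 2) (by omega), sum_range_succ']
  simp

theorem zernikeForm_eq_sum_telescope (a : ℝ) (m n : ℕ) :
    zernikeForm u v a m n =
      ∑ s ∈ range (m + 1), (zernikeCoeff a m n (s + 1) - zernikeCoeff a m n s) •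
        (u ^ (m - s) * v ^ (n - s) * (u * v - 1) ^ (s + 1)) + u ^ (m + 1) * v ^ (n + 1) := by
  set B : ℕ → A := fun s => u ^ (m + 1 - s) * v ^ (n + 1 - s) * (u * v - 1) ^ s
  have hB0 : B 0 = u ^ (m + 1) * v ^ (n + 1) := by simp [B]
  have hB1 (s : ℕ) : B (s + 1) = u ^ (m - s) * v ^ (n - s) * (u * v - 1) ^ (s + 1) := by
    simp [B, Nat.add_sub_add_right]
  -- `uv - (uv - 1) = 1` makes the sum telescope
  have hdiff : ∀ s ∈ range (m + 1), zernikeCoeff a m n s •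
      (u ^ (m - s) * v ^ (n - s) * (u * v - 1) ^ s) = zernikeCoeff a m n s • (B s - B (s + 1)) := by
    intro s hs
    rcases Nat.lt_or_ge n s with h | h
    · rw [zernikeCoeff_eq_zero_of_lt_right _ _ h, zero_smul, zero_smul]
    · have hm : s ≤ m := Nat.lt_succ_iff.1 (mem_range.1 hs)
      rw [hB1]
      simp only [B, show m + 1 - s = m - s + 1 by omega, show n + 1 - s = n - s + 1 by omega]
      congr 1
      ring
  have hshift : ∑ s ∈ range (m + 1), zernikeCoeff a m n s • B s =
      ∑ s ∈ range (m + 1), zernikeCoeff a m n (s + 1) • B (s + 1) + B 0 := by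
    have h1 := sum_range_succ (fun s => zernikeCoeff a m n s • B s) (m + 1)
    have h2 := sum_range_succ' (fun s => zernikeCoeff a m n s • B s) (m + 1)
    rw [zernikeCoeff_eq_zero_of_lt_left _ _ (Nat.lt_succ_self m), zero_smul, add_zero] at h1
    rw [← h1, h2, zernikeCoeff_zero, one_smul]
  rw [zernikeForm_eq_sum_range (N := m + 1) (by omega), sum_congr rfl hdiff]
  simp only [smul_sub, sum_sub_distrib, sub_smul, hshift, ← hB0, ← hB1]
  abel

theorem zernikeForm_contiguous {a : ℝ} (ha : -1 < a) (m n : ℕ) :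
    ((a + 1) * (m + n + a + 1)) • zernikeForm u v a m n =
      ((m + a + 1) * (n + a + 1)) • zernikeForm u v (a + 1) m n -
        (m * n : ℝ) • zernikeForm u v (a + 1) (m - 1) (n - 1) := by
  rcases m with _ | m
  · simp only [zernikeForm_zero_left]; module
  rcases n with _ | n
  · simp only [zernikeForm_zero_right]; module
  have hcoeff : ((a + 1) * (m + 1 + (n + 1) + a + 1)) •
      ∑ s ∈ range (m + 1), zernikeCoeff a (m + 1) (n + 1) (s + 1) •
        (u ^ (m - s) * v ^ (n - s) * (u * v - 1) ^ (s + 1)) =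
      ((m + 1 + a + 1) * (n + 1 + a + 1)) •
        ∑ s ∈ range (m + 1), zernikeCoeff (a + 1) (m + 1) (n + 1) (s + 1) •
          (u ^ (m - s) * v ^ (n - s) * (u * v - 1) ^ (s + 1)) -
      ((m + 1) * (n + 1) : ℝ) • ∑ s ∈ range (m + 1),
        (zernikeCoeff (a + 1) m n (s + 1) - zernikeCoeff (a + 1) m n s) •
          (u ^ (m - s) * v ^ (n - s) * (u * v - 1) ^ (s + 1)) := by
    simp only [smul_sum, smul_smul, ← sum_sub_distrib, ← sub_smul]
    refine sum_congr rfl fun s _ => ?_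
    congr 1
    linear_combination zernikeCoeff_contiguous ha m n s
  simp only [Nat.add_sub_cancel, zernikeForm_succ_succ,
    zernikeForm_eq_sum_telescope (a := a + 1) m n, Nat.cast_add, Nat.cast_one]
  rw [smul_add, smul_add, smul_add, hcoeff]
  module

variable {D : Derivation ℝ A A}

theorem Derivation.map_zernike_monomial (hu : D u = 0) (hv : D v = 1) (p q s : ℕ) :
    D (u ^ p * v ^ q * (u * v - 1) ^ s) =
      q • (u ^ p * v ^ (q - 1) * (u * v - 1) ^ s) +
        s • (u ^ (p + 1) * v ^ q * (u * v - 1) ^ (s - 1)) := by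
  have hw : D (u * v - 1) = u := by simp [Derivation.leibniz, hu, hv]
  simp only [Derivation.leibniz, Derivation.leibniz_pow, hu, hv, hw, smul_eq_mul, nsmul_eq_mul]
  ring

theorem Derivation.map_zernikeForm {a : ℝ} (ha : -1 < a) (hu : D u = 0) (hv : D v = 1)
    (m n : ℕ) :
    D (zernikeForm u v a m n) =
      (n * (m + a + 1) / (a + 1)) • zernikeForm u v (a + 1) m (n - 1) := by
  rcases n with _ | n
  · simp [Derivation.leibniz_pow, hu]
  rw [zernikeForm_eq_sum_range (N := m + 2) (by omega),
    zernikeForm_eq_sum_range (N := m + 1) (by omega)]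
  simp only [map_sum, map_smul, Derivation.map_zernike_monomial hu hv, smul_add, sum_add_distrib,
    smul_sum, smul_smul, Nat.add_sub_cancel]
  rw [sum_range_succ, sum_range_succ' _ (m + 1)]
  simp only [zernikeCoeff_eq_zero_of_lt_left a _ (Nat.lt_succ_self m), zero_smul, smul_zero,
    add_zero]
  rw [← sum_add_distrib]
  refine sum_congr rfl fun s _ => ?_
  have hu_exp : zernikeCoeff a m (n + 1) (s + 1) •
      (s + 1) • (u ^ (m - (s + 1) + 1) * v ^ (n + 1 - (s + 1)) * (u * v - 1) ^ (s + 1 - 1)) =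
      zernikeCoeff a m (n + 1) (s + 1) •
        (s + 1) • (u ^ (m - s) * v ^ (n - s) * (u * v - 1) ^ s) := by
    rcases Nat.lt_or_ge s m with h | h
    · rw [show m - (s + 1) + 1 = m - s by omega, show n + 1 - (s + 1) = n - s by omega,
        Nat.add_sub_cancel]
    · rw [zernikeCoeff_eq_zero_of_lt_left a _ (by omega), zero_smul, zero_smul]
  rw [hu_exp, show n + 1 - s - 1 = n - s by omega, ← Nat.cast_smul_eq_nsmul ℝ,
    ← Nat.cast_smul_eq_nsmul ℝ, smul_smul, smul_smul, ← add_smul, zernikeCoeff_mul_natCast_sub]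
  congr 1
  push_cast
  linear_combination zernikeCoeff_lowering ha m n s

end ZernikeForm

theorem gamma_mul_jacobiP_eq_sum {a : ℝ} (ha : -1 < a) {k M : ℕ} (hk : k ≤ M) (t : ℝ) :
    Real.Gamma (k + 1) * Real.Gamma (a + 1) / Real.Gamma (k + a + 1) *
        jacobiP a ((M - k : ℕ) : ℝ) k t =
      ∑ s ∈ range (k + 1), zernikeCoeff a k M s * ((t - 1) / 2) ^ s * ((t + 1) / 2) ^ (k - s) := by
  have hΓ (s : ℕ) :
      Real.Gamma (a + s + 1) = (ascPochhammer ℝ s).eval (a + 1) * Real.Gamma (a + 1) := by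
    rw [add_right_comm, Real.Gamma_add_nat_eq_ascPochhammer_mul]
    intro n h; linarith [(Nat.cast_nonneg n : (0 : ℝ) ≤ n)]
  have hΓpos : 0 < Real.Gamma (a + 1) := Real.Gamma_pos_of_pos (by linarith)
  have hΓk : 0 < Real.Gamma (a + k + 1) :=
    Real.Gamma_pos_of_pos (by linarith [(Nat.cast_nonneg k : (0 : ℝ) ≤ k)])
  rw [jacobiP, mul_sum]
  refine sum_congr rfl fun s hs => ?_
  have hsk : s ≤ k := Nat.lt_succ_iff.1 (mem_range.1 hs)
  have hM : ((M - k : ℕ) : ℝ) + k = M := by rw [Nat.cast_sub hk]; ring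
  have hMs : ((M - k : ℕ) : ℝ) + ((k - s : ℕ) : ℝ) = ((M - s : ℕ) : ℝ) := by
    rw [Nat.cast_sub hk, Nat.cast_sub hsk, Nat.cast_sub (hsk.trans hk)]; ring
  have hk! := Nat.factorial_mul_descFactorial hsk
  have hM! := Nat.factorial_mul_descFactorial (hsk.trans hk)
  have hρ := ascPochhammer_pos s (a + 1) (by linarith)
  rw [hM, hMs, Real.Gamma_nat_eq_factorial, Real.Gamma_nat_eq_factorial,
    Real.Gamma_nat_eq_factorial, hΓ s, show (k : ℝ) + a + 1 = a + k + 1 by ring, zernikeCoeff,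
    descPochhammer_eval_eq_descFactorial, descPochhammer_eval_eq_descFactorial, ← hk!, ← hM!]
  push_cast
  field_simp

section Wirtinger

open MvPolynomial

def wirtingerCoords : Fin 2 → E 2 →L[ℝ] ℂ :=
  ![(Complex.orthonormalBasisOneI.repr.symm.toContinuousLinearEquiv : E 2 →L[ℝ] ℂ),
    Complex.conjCLE.toContinuousLinearMap.comp
      (Complex.orthonormalBasisOneI.repr.symm.toContinuousLinearEquiv : E 2 →L[ℝ] ℂ)]

@[simp] theorem wirtingerCoords_zero (x : E 2) :
    wirtingerCoords 0 x = x 0 + x 1 * Complex.I := by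
  simp [wirtingerCoords, Complex.orthonormalBasisOneI_repr_symm_apply]

@[simp] theorem wirtingerCoords_one (x : E 2) :
    wirtingerCoords 1 x = x 0 - x 1 * Complex.I := by
  simp [wirtingerCoords, Complex.orthonormalBasisOneI_repr_symm_apply, sub_eq_add_neg]

theorem norm_sq_eq_wirtingerCoords_mul (x : E 2) :
    ((‖x‖ ^ 2 : ℝ) : ℂ) = wirtingerCoords 0 x * wirtingerCoords 1 x := by
  rw [EuclideanSpace.norm_eq, Real.sq_sqrt (by positivity), Fin.sum_univ_two, Real.norm_eq_abs,
    Real.norm_eq_abs, sq_abs, sq_abs, wirtingerCoords_zero, wirtingerCoords_one]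
  push_cast
  linear_combination ((x 1 : ℂ) ^ 2) * Complex.I_sq

theorem dzbar_aeval (p : MvPolynomial (Fin 2) ℝ) (x : E 2) :
    dzbar (fun y => aeval (fun i => wirtingerCoords i y) p) x =
      aeval (fun i => wirtingerCoords i x) (pderiv 1 p) := by
  rw [dzbar, (hasFDerivAt_aeval_clm wirtingerCoords p x).fderiv]
  simp [Fin.sum_univ_two]
  linear_combination (aeval (fun i => wirtingerCoords i x) (pderiv 0 p) -
    aeval (fun i => wirtingerCoords i x) (pderiv 1 p)) / 2 * Complex.I_sq

theorem dz_aeval (p : MvPolynomial (Fin 2) ℝ) (x : E 2) :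
    dz (fun y => aeval (fun i => wirtingerCoords i y) p) x =
      aeval (fun i => wirtingerCoords i x) (pderiv 0 p) := by
  rw [dz, (hasFDerivAt_aeval_clm wirtingerCoords p x).fderiv]
  simp [Fin.sum_univ_two]
  linear_combination (aeval (fun i => wirtingerCoords i x) (pderiv 1 p) -
    aeval (fun i => wirtingerCoords i x) (pderiv 0 p)) / 2 * Complex.I_sq

def zernikePoly (a : ℝ) (m n : ℕ) : MvPolynomial (Fin 2) ℝ := zernikeForm (X 0) (X 1) a m n

theorem zern_eq_aeval {a : ℝ} (ha : -1 < a) (m n : ℕ) :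
    zern a m n = fun x => aeval (fun i => wirtingerCoords i x) (zernikePoly a m n) := by
  funext x
  have hJ := gamma_mul_jacobiP_eq_sum ha (min_le_max (a := m) (b := n)) (2 * ‖x‖ ^ 2 - 1)
  have hr := norm_sq_eq_wirtingerCoords_mul x
  rw [zern, mul_right_comm, ← Complex.ofReal_mul, hJ]
  simp only [zernikePoly, zernikeForm, map_sum, map_smul, map_mul, map_pow, map_sub, map_one,
    aeval_X, Complex.real_smul, ← wirtingerCoords_zero, ← wirtingerCoords_one]
  generalize ‖x‖ ^ 2 = r at hr ⊢
  generalize wirtingerCoords 0 x = z at hr ⊢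
  generalize wirtingerCoords 1 x = w at hr ⊢
  rw [show (2 * r - 1 - 1) / 2 = r - 1 by ring, show (2 * r - 1 + 1) / 2 = r by ring]
  push_cast
  rw [hr, sum_mul]
  split_ifs with h
  · rw [min_eq_right h, max_eq_left h]
    refine sum_congr rfl fun s hs => ?_
    have hs : s ≤ n := Nat.lt_succ_iff.1 (mem_range.1 hs)
    rw [zernikeCoeff_comm, show m - s = (m - n) + (n - s) by omega, pow_add]
    ring
  · rw [min_eq_left (by omega), max_eq_right (by omega)]
    refine sum_congr rfl fun s hs => ?_
    have hs : s ≤ m := Nat.lt_succ_iff.1 (mem_range.1 hs)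
    rw [show n - s = (n - m) + (m - s) by omega, pow_add]
    ring

theorem dzbar_zern {a : ℝ} (ha : -1 < a) (m n : ℕ) (x : E 2) :
    dzbar (zern a m n) x = ((n * (m + a + 1) / (a + 1) : ℝ) : ℂ) * zern (a + 1) m (n - 1) x := by
  rw [zern_eq_aeval ha, dzbar_aeval, zernikePoly,
    Derivation.map_zernikeForm ha (pderiv_X_of_ne (by decide)) (pderiv_X_self 1), map_smul,
    zern_eq_aeval (by linarith), Complex.real_smul, zernikePoly]

theorem dz_zern {a : ℝ} (ha : -1 < a) (m n : ℕ) (x : E 2) :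
    dz (zern a m n) x = ((m * (n + a + 1) / (a + 1) : ℝ) : ℂ) * zern (a + 1) (m - 1) n x := by
  rw [zern_eq_aeval ha, dz_aeval, zernikePoly, ← zernikeForm_comm,
    Derivation.map_zernikeForm ha (pderiv_X_of_ne (by decide)) (pderiv_X_self 0),
    zernikeForm_comm, map_smul, zern_eq_aeval (by linarith), Complex.real_smul, zernikePoly]

theorem zern_contiguous {a : ℝ} (ha : -1 < a) (m n : ℕ) (x : E 2) :
    (((a + 1) * (m + n + a + 1) : ℝ) : ℂ) * zern a m n x =
      (((m + a + 1) * (n + a + 1) : ℝ) : ℂ) * zern (a + 1) m n x -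
        ((m * n : ℝ) : ℂ) * zern (a + 1) (m - 1) (n - 1) x := by
  simp only [zern_eq_aeval ha, zern_eq_aeval (show -1 < a + 1 by linarith), ← Complex.real_smul,
    ← map_smul, ← map_sub, zernikePoly, zernikeForm_contiguous ha]

end Wirtinger

theorem lowering_combination_of_contiguous {a : ℝ} (ha : -1 < a) (m n : ℕ) {P Q R : ℂ}
    (h : (((a + 1) * (m + n + a + 1) : ℝ) : ℂ) * P =
      (((m + a + 1) * (n + a + 1) : ℝ) : ℂ) * Q - ((m * n : ℝ) : ℂ) * R) :
    ((((m : ℝ) + n + a + 1) : ℝ) : ℂ) * P =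
      ((((n : ℝ) + a + 1) / ((n : ℝ) + 1) : ℝ) : ℂ) *
          ((((n + 1 : ℕ) : ℝ) * (m + a + 1) / (a + 1) : ℝ) * Q) -
        (((if m = 0 then (0 : ℝ) else (m : ℝ) / ((m : ℝ) + a)) : ℝ) : ℂ) *
          (((n : ℝ) * (((m - 1 : ℕ) : ℝ) + a + 1) / (a + 1) : ℝ) * R) := by
  have ha1 : (a : ℂ) + 1 ≠ 0 := by exact_mod_cast (show a + 1 ≠ 0 by linarith)
  rcases m with _ | m
  · simp only [if_true, Nat.cast_zero, zero_mul, Complex.ofReal_zero] at h ⊢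
    push_cast at h ⊢
    field_simp
    linear_combination h
  · have hma : (m : ℂ) + 1 + a ≠ 0 := by
      exact_mod_cast (show (m : ℝ) + 1 + a ≠ 0 by linarith [(Nat.cast_nonneg m : (0 : ℝ) ≤ m)])
    simp only [Nat.add_sub_cancel, Nat.add_one_ne_zero, if_false] at h ⊢
    push_cast at h ⊢
    field_simp
    linear_combination (m + 1 + a : ℂ) * h

/-- **Same-parameter expansions via first-order derivatives.** For `α > −1` and `m, n ∈ ℕ₀`,
on the unit disk:
`(m+n+α+1) P^α_{m,n} = [(n+α+1)/(n+1)] ∂_z̄ P^α_{m,n+1} − [m/(m+α)] ∂_z̄ P^α_{m−1,n}` and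
`(m+n+α+1) P^α_{m,n} = [(m+α+1)/(m+1)] ∂_z P^α_{m+1,n} − [n/(n+α)] ∂_z P^α_{m,n−1}`,
where the coefficient `m/(m+α)` (resp. `n/(n+α)`) is interpreted as `0` when `m = 0`
(resp. `n = 0`), so that the corresponding term vanishes. -/
theorem zernike_derivative_expansions (a : ℝ) (ha : -1 < a) (m n : ℕ) :
    ∀ x ∈ Metric.ball (0 : E 2) 1,
      ((((m : ℝ) + n + a + 1) : ℝ) : ℂ) * zern a m n x =
          ((((n : ℝ) + a + 1) / ((n : ℝ) + 1) : ℝ) : ℂ) * dzbar (zern a m (n + 1)) x -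
            (((if m = 0 then (0 : ℝ) else (m : ℝ) / ((m : ℝ) + a)) : ℝ) : ℂ) *
              dzbar (zern a (m - 1) n) x ∧
      ((((m : ℝ) + n + a + 1) : ℝ) : ℂ) * zern a m n x =
          ((((m : ℝ) + a + 1) / ((m : ℝ) + 1) : ℝ) : ℂ) * dz (zern a (m + 1) n) x -
            (((if n = 0 then (0 : ℝ) else (n : ℝ) / ((n : ℝ) + a)) : ℝ) : ℂ) *
              dz (zern a m (n - 1)) x := by
  intro x _
  have hc := zern_contiguous ha m n x
  constructor
  · rw [dzbar_zern ha, dzbar_zern ha, Nat.add_sub_cancel]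
    exact lowering_combination_of_contiguous ha m n hc
  · rw [dz_zern ha, dz_zern ha, Nat.add_sub_cancel, add_comm (m : ℝ) n]
    refine lowering_combination_of_contiguous ha n m ?_
    push_cast at hc ⊢
    linear_combination hc

end
end
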